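/- Without assuming monotonicity, the covariate-adjusted intention-to-treat contrast on the outcome identifies the covariance-type contrast of potential outcomes: Γ0 := E[m1(X) − m0(X)] = E[(Y1 − Y0)·(A1 − A0)] = E[(Y1 − Y0)·1{A1 > A0}] − E[(Y1 − Y0)·1{A1 < A0}]. -/

import Mathlib

/-!
Write `F_z := (1 - A_z) Y0 + A_z Y1` for the outcome under instrument value `z`, so that
`Y = F_z` on `{Z = z}`, and let `π_1 := e`, `π_0 := 1 - e`. Unconfoundedness gives
`E[1{Z = z} F_z | X] = π_z(X) E[F_z | X]`, while `m_z(X) π_z(X) = E[1{Z = z} Y | X]`; dividing by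
`π_z ≥ ε` yields `E[m_z(X)] = E[F_z]`. Finally `F_1 - F_0 = (Y1 - Y0)(A1 - A0)`, and for binary
treatments `A1 - A0 = 1{A1 > A0} - 1{A1 < A0}`.

The versions `m_z` are only tested against bounded functions of `X`, so `m_z(X)` is not known to
be integrable a priori. One first shows `|m_z(X)| ≤ sup |F_z|` almost surely: on `{m_z > C}` the
test function `m_z - C` (truncated to make it bounded) would give `E[π_z(X) (m_z(X) - C)] > 0`,
whereas the defining identity of `m_z` makes it `E[1{Z = z} (F_z - C)] ≤ 0`.
-/

open MeasureTheory ProbabilityTheory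

lemma abs_max_neg_min_le (C x : ℝ) : |max (-C) (min C x)| ≤ |C| :=
  abs_le.2 ⟨(neg_le_neg (le_abs_self C)).trans (le_max_left _ _),
    max_le (neg_le_abs C) ((min_le_left _ _).trans (le_abs_self C))⟩

lemma max_neg_min_eq_self {C x : ℝ} (h : |x| ≤ C) : max (-C) (min C x) = x := by
  rw [min_eq_right (abs_le.1 h).2, max_eq_right (abs_le.1 h).1]

lemma abs_le_one_of_mem_Icc {a : ℝ} (ha : a ∈ Set.Icc (0 : ℝ) 1) : |a| ≤ 1 :=
  abs_le.2 ⟨by linarith [ha.1], ha.2⟩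

lemma abs_mul_le_of_mem_Icc {a b C : ℝ} (ha : a ∈ Set.Icc (0 : ℝ) 1) (hb : |b| ≤ C) :
    |a * b| ≤ C := by
  rw [abs_mul, abs_of_nonneg ha.1]
  exact (mul_le_of_le_one_left (abs_nonneg b) ha.2).trans hb

lemma abs_one_sub_mul_add_mul_le {a y₀ y₁ C : ℝ} (ha : a = 0 ∨ a = 1) (h₀ : |y₀| ≤ C)
    (h₁ : |y₁| ≤ C) : |(1 - a) * y₀ + a * y₁| ≤ C := by
  rcases ha with rfl | rfl <;> simpa

lemma abs_indicator_sub_le {α : Type*} {B : Set α} {f : α → ℝ} {C D : ℝ}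
    (h : ∀ x ∈ B, f x ∈ Set.Icc C D) (x : α) :
    |B.indicator (fun x => f x - C) x| ≤ |D - C| := by
  by_cases hx : x ∈ B
  · rw [Set.indicator_of_mem hx]
    exact abs_le_abs (by linarith [(h x hx).2]) (by linarith [(h x hx).1, (h x hx).2])
  · simp [hx]

lemma integrable_of_abs_le {Ω : Type*} [MeasurableSpace Ω] {μ : Measure Ω} [IsFiniteMeasure μ]
    {f : Ω → ℝ} (hf : Measurable f) {C : ℝ} (hC : ∀ ω, |f ω| ≤ C) : Integrable f μ :=
  .of_bound hf.aestronglyMeasurable C (ae_of_all _ hC)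

section PropensityBalance

variable {Ω S : Type*} [MeasurableSpace Ω] [MeasurableSpace S] {μ : Measure Ω}
  {X : Ω → S} {V F : Ω → ℝ} {π m : S → ℝ}

/-- `E[V F | X] = π(X) E[F | X]`, tested against bounded measurable functions of `X`. -/
def PropensityBalanced (μ : Measure Ω) (X : Ω → S) (V : Ω → ℝ) (π : S → ℝ) (F : Ω → ℝ) :
    Prop :=
  ∀ g : S → ℝ, Measurable g → (∃ C, ∀ x, |g x| ≤ C) →
    ∫ ω, V ω * F ω * g (X ω) ∂μ = ∫ ω, π (X ω) * F ω * g (X ω) ∂μ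

lemma propensityBalanced_comp_of_abs_le {T : Type*} [MeasurableSpace T] {W : Ω → T}
    (h : ∀ ψ : T → ℝ, Measurable ψ → (∃ C, ∀ v, |ψ v| ≤ C) →
      PropensityBalanced μ X V π (fun ω => ψ (W ω)))
    {ψ : T → ℝ} (hψ : Measurable ψ) {C : ℝ} (hC : ∀ ω, |ψ (W ω)| ≤ C) :
    PropensityBalanced μ X V π (fun ω => ψ (W ω)) := by
  have hclamp := h (fun v => max (-C) (min C (ψ v))) (by fun_prop)
    ⟨|C|, fun v => abs_max_neg_min_le C (ψ v)⟩
  simpa only [max_neg_min_eq_self (hC _)] using hclamp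

lemma PropensityBalanced.one_sub [IsFiniteMeasure μ] (h : PropensityBalanced μ X V π F)
    (hX : Measurable X) (hV : Measurable V) (hV01 : ∀ ω, V ω ∈ Set.Icc (0 : ℝ) 1)
    (hπ : Measurable π) (hπ01 : ∀ x, π x ∈ Set.Icc (0 : ℝ) 1)
    (hF : Measurable F) {C : ℝ} (hFC : ∀ ω, |F ω| ≤ C) :
    PropensityBalanced μ X (fun ω => 1 - V ω) (fun x => 1 - π x) F := by
  intro g hg ⟨Cg, hCg⟩
  have hFg : Integrable (fun ω => F ω * g (X ω)) μ :=
    integrable_of_abs_le (by fun_prop) fun ω => by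
      rw [abs_mul]
      exact mul_le_mul (hFC ω) (hCg _) (abs_nonneg _) ((abs_nonneg _).trans (hFC ω))
  have hVFg : Integrable (fun ω => V ω * F ω * g (X ω)) μ := by
    simpa only [mul_assoc] using hFg.bdd_mul (c := 1) hV.aestronglyMeasurable
      (ae_of_all _ fun ω => abs_le_one_of_mem_Icc (hV01 ω))
  have hπFg : Integrable (fun ω => π (X ω) * F ω * g (X ω)) μ := by
    simpa only [mul_assoc] using hFg.bdd_mul (f := fun ω => π (X ω)) (c := 1)
      (hπ.comp hX).aestronglyMeasurable (ae_of_all _ fun ω => abs_le_one_of_mem_Icc (hπ01 (X ω)))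
  simp only [sub_mul, one_mul]
  rw [integral_sub hFg hVFg, integral_sub hFg hπFg, h g hg ⟨Cg, hCg⟩]

lemma integral_comp_mul_indicator_nonpos_of_propensityBalanced [IsFiniteMeasure μ]
    (hX : Measurable X) (hV : Measurable V) (hV01 : ∀ ω, V ω ∈ Set.Icc (0 : ℝ) 1)
    (hF : Integrable F μ) {C D : ℝ} (hFC : ∀ ω, F ω ≤ C) (h1 : PropensityBalanced μ X V π 1)
    (hm : Measurable m) (hmF : ∀ g : S → ℝ, Measurable g → (∃ C, ∀ x, |g x| ≤ C) →
      ∫ ω, F ω * V ω * g (X ω) ∂μ = ∫ ω, m (X ω) * V ω * g (X ω) ∂μ)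
    {B : Set S} (hB : MeasurableSet B) (hmB : ∀ x ∈ B, m x ∈ Set.Icc C D) :
    ∫ ω, π (X ω) * B.indicator (fun x => m x - C) (X ω) ∂μ ≤ 0 := by
  set g : S → ℝ := B.indicator 1
  set t : S → ℝ := B.indicator fun x => m x - C
  have hg01 : ∀ x, g x ∈ Set.Icc (0 : ℝ) 1 := fun x => by
    by_cases hx : x ∈ B <;> simp [g, hx]
  have htD : ∀ x, |t x| ≤ |D - C| := abs_indicator_sub_le hmB
  have hVg01 : ∀ ω, V ω * g (X ω) ∈ Set.Icc (0 : ℝ) 1 := fun ω =>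
    ⟨mul_nonneg (hV01 ω).1 (hg01 _).1, mul_le_one₀ (hV01 ω).2 (hg01 _).1 (hg01 _).2⟩
  have hg : Measurable g := measurable_one.indicator hB
  have hVg : Integrable (fun ω => V ω * g (X ω)) μ :=
    integrable_of_abs_le (by fun_prop) fun ω => abs_le_one_of_mem_Icc (hVg01 ω)
  have hVt : Integrable (fun ω => V ω * t (X ω)) μ :=
    integrable_of_abs_le (by fun_prop) fun ω => abs_mul_le_of_mem_Icc (hV01 ω) (htD _)
  have hmVg : ∫ ω, m (X ω) * V ω * g (X ω) ∂μ
      = ∫ ω, V ω * t (X ω) ∂μ + C * ∫ ω, V ω * g (X ω) ∂μ := by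
    rw [← integral_const_mul, ← integral_add hVt (hVg.const_mul C)]
    congr 1; ext ω
    by_cases hx : X ω ∈ B <;> simp [g, t, hx]; ring
  have hFVg : ∫ ω, F ω * V ω * g (X ω) ∂μ ≤ C * ∫ ω, V ω * g (X ω) ∂μ := by
    rw [← integral_const_mul]
    refine integral_mono ?_ (hVg.const_mul C) fun ω => ?_
    · simpa only [mul_comm (F _), mul_assoc] using hF.bdd_mul (f := fun ω => V ω * g (X ω))
        (c := 1) (by fun_prop) (ae_of_all _ fun ω => abs_le_one_of_mem_Icc (hVg01 ω))
    · simpa only [mul_assoc] using mul_le_mul_of_nonneg_right (hFC ω) (hVg01 ω).1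
  have hπV := h1 t ((hm.sub measurable_const).indicator hB) ⟨_, htD⟩
  simp only [Pi.one_apply, mul_one] at hπV
  rw [← hπV]
  linarith [hmF g hg ⟨1, fun x => abs_le_one_of_mem_Icc (hg01 x)⟩]

lemma ae_comp_notMem_of_propensityBalanced [IsFiniteMeasure μ] (hX : Measurable X)
    (hV : Measurable V) (hV01 : ∀ ω, V ω ∈ Set.Icc (0 : ℝ) 1)
    (hπ : Measurable π) (hπ01 : ∀ x, π x ∈ Set.Ioc (0 : ℝ) 1)
    (hF : Integrable F μ) {C D : ℝ} (hFC : ∀ ω, F ω ≤ C) (h1 : PropensityBalanced μ X V π 1)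
    (hm : Measurable m) (hmF : ∀ g : S → ℝ, Measurable g → (∃ C, ∀ x, |g x| ≤ C) →
      ∫ ω, F ω * V ω * g (X ω) ∂μ = ∫ ω, m (X ω) * V ω * g (X ω) ∂μ)
    {B : Set S} (hB : MeasurableSet B) (hmB : ∀ x ∈ B, m x ∈ Set.Ioc C D) :
    ∀ᵐ ω ∂μ, X ω ∉ B := by
  have hmB' : ∀ x ∈ B, m x ∈ Set.Icc C D := fun x hx => Set.Ioc_subset_Icc_self (hmB x hx)
  set t : S → ℝ := B.indicator fun x => m x - C
  have hπt0 : ∀ ω, 0 ≤ π (X ω) * t (X ω) := fun ω => by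
    by_cases hx : X ω ∈ B
    · simpa [t, hx] using mul_nonneg (hπ01 _).1.le (sub_nonneg.2 (hmB _ hx).1.le)
    · simp [t, hx]
  have hπti : Integrable (fun ω => π (X ω) * t (X ω)) μ :=
    integrable_of_abs_le (by fun_prop) fun ω =>
      abs_mul_le_of_mem_Icc (Set.Ioc_subset_Icc_self (hπ01 _)) (abs_indicator_sub_le hmB' (X ω))
  have hzero := (integral_eq_zero_iff_of_nonneg hπt0 hπti).1
    (le_antisymm (integral_comp_mul_indicator_nonpos_of_propensityBalanced hX hV hV01 hF hFC h1
      hm hmF hB hmB') (integral_nonneg hπt0))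
  filter_upwards [hzero] with ω hω hXB
  have hpos : 0 < π (X ω) * t (X ω) := by
    simpa [t, hXB] using mul_pos (hπ01 _).1 (sub_pos.2 (hmB _ hXB).1)
  exact hpos.ne' hω

lemma ae_comp_le_of_propensityBalanced [IsFiniteMeasure μ] (hX : Measurable X)
    (hV : Measurable V) (hV01 : ∀ ω, V ω ∈ Set.Icc (0 : ℝ) 1)
    (hπ : Measurable π) (hπ01 : ∀ x, π x ∈ Set.Ioc (0 : ℝ) 1)
    (hF : Integrable F μ) {C : ℝ} (hFC : ∀ ω, F ω ≤ C) (h1 : PropensityBalanced μ X V π 1)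
    (hm : Measurable m) (hmF : ∀ g : S → ℝ, Measurable g → (∃ C, ∀ x, |g x| ≤ C) →
      ∫ ω, F ω * V ω * g (X ω) ∂μ = ∫ ω, m (X ω) * V ω * g (X ω) ∂μ) :
    ∀ᵐ ω ∂μ, m (X ω) ≤ C := by
  have hB (n : ℕ) : ∀ᵐ ω ∂μ, X ω ∉ m ⁻¹' Set.Ioc C n :=
    ae_comp_notMem_of_propensityBalanced hX hV hV01 hπ hπ01 hF hFC h1 hm hmF
      (hm measurableSet_Ioc) fun _ hx => hx
  filter_upwards [ae_all_iff.2 hB] with ω hω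
  by_contra! hlt
  exact hω ⌈m (X ω)⌉₊ ⟨hlt, Nat.le_ceil _⟩

lemma ae_abs_comp_le_of_propensityBalanced [IsFiniteMeasure μ] (hX : Measurable X)
    (hV : Measurable V) (hV01 : ∀ ω, V ω ∈ Set.Icc (0 : ℝ) 1)
    (hπ : Measurable π) (hπ01 : ∀ x, π x ∈ Set.Ioc (0 : ℝ) 1)
    (hF : Measurable F) {C : ℝ} (hFC : ∀ ω, |F ω| ≤ C) (h1 : PropensityBalanced μ X V π 1)
    (hm : Measurable m) (hmF : ∀ g : S → ℝ, Measurable g → (∃ C, ∀ x, |g x| ≤ C) →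
      ∫ ω, F ω * V ω * g (X ω) ∂μ = ∫ ω, m (X ω) * V ω * g (X ω) ∂μ) :
    ∀ᵐ ω ∂μ, |m (X ω)| ≤ C := by
  have hFi : Integrable F μ := integrable_of_abs_le hF hFC
  have hmF_neg : ∀ g : S → ℝ, Measurable g → (∃ C, ∀ x, |g x| ≤ C) →
      ∫ ω, -F ω * V ω * g (X ω) ∂μ = ∫ ω, -m (X ω) * V ω * g (X ω) ∂μ := fun g hg hgb => by
    simp only [neg_mul, integral_neg, hmF g hg hgb]
  filter_upwards [ae_comp_le_of_propensityBalanced hX hV hV01 hπ hπ01 hFi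
      (fun ω => (abs_le.1 (hFC ω)).2) h1 hm hmF,
    ae_comp_le_of_propensityBalanced (F := fun ω => -F ω) (m := fun x => -m x) hX hV hV01 hπ
      hπ01 hFi.neg (fun ω => neg_le.1 (abs_le.1 (hFC ω)).1) h1 hm.neg hmF_neg] with ω hle hge
  exact abs_le.2 ⟨neg_le.1 hge, hle⟩

theorem integrable_comp_and_integral_comp_eq_of_propensityBalanced [IsFiniteMeasure μ]
    (hX : Measurable X) (hV : Measurable V) (hV01 : ∀ ω, V ω ∈ Set.Icc (0 : ℝ) 1)
    (hπ : Measurable π) {ε : ℝ} (hε : 0 < ε) (hπε : ∀ x, π x ∈ Set.Icc ε 1)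
    (hF : Measurable F) {C : ℝ} (hFC : ∀ ω, |F ω| ≤ C)
    (h1 : PropensityBalanced μ X V π 1) (hbal : PropensityBalanced μ X V π F)
    (hm : Measurable m) (hmF : ∀ g : S → ℝ, Measurable g → (∃ C, ∀ x, |g x| ≤ C) →
      ∫ ω, F ω * V ω * g (X ω) ∂μ = ∫ ω, m (X ω) * V ω * g (X ω) ∂μ) :
    Integrable (fun ω => m (X ω)) μ ∧ ∫ ω, m (X ω) ∂μ = ∫ ω, F ω ∂μ := by
  have hπ01 : ∀ x, π x ∈ Set.Ioc (0 : ℝ) 1 := fun x => ⟨hε.trans_le (hπε x).1, (hπε x).2⟩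
  have hmC := ae_abs_comp_le_of_propensityBalanced hX hV hV01 hπ hπ01 hF hFC h1 hm hmF
  refine ⟨.of_bound (hm.comp hX).aestronglyMeasurable C hmC, ?_⟩
  -- `m` may be unbounded off the range of `X`; its clamp `M` is a bounded test function
  set M : S → ℝ := fun x => max (-C) (min C (m x))
  have hMm : ∀ᵐ ω ∂μ, M (X ω) = m (X ω) := hmC.mono fun ω h => max_neg_min_eq_self h
  have hπ0 : ∀ x, π x ≠ 0 := fun x => (hπ01 x).1.ne'
  have hπinv : ∀ x, |(π x)⁻¹| ≤ ε⁻¹ := fun x => by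
    rw [abs_inv, abs_of_pos (hπ01 x).1]
    exact inv_anti₀ hε (hπε x).1
  have hMπ : ∀ x, |M x * (π x)⁻¹| ≤ |C| * ε⁻¹ := fun x => by
    rw [abs_mul]
    exact mul_le_mul (abs_max_neg_min_le C _) (hπinv x) (abs_nonneg _) (abs_nonneg _)
  calc ∫ ω, m (X ω) ∂μ = ∫ ω, π (X ω) * (1 : Ω → ℝ) ω * (M (X ω) * (π (X ω))⁻¹) ∂μ :=
        integral_congr_ae (hMm.mono fun ω h => by field_simp [hπ0]; simp [h])
    _ = ∫ ω, V ω * (1 : Ω → ℝ) ω * (M (X ω) * (π (X ω))⁻¹) ∂μ :=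
        (h1 (fun x => M x * (π x)⁻¹) (by fun_prop) ⟨_, hMπ⟩).symm
    _ = ∫ ω, m (X ω) * V ω * (π (X ω))⁻¹ ∂μ :=
        integral_congr_ae (hMm.mono fun ω h => by simp only [Pi.one_apply, h]; ring)
    _ = ∫ ω, V ω * F ω * (π (X ω))⁻¹ ∂μ := by
        rw [← hmF (fun x => (π x)⁻¹) hπ.inv ⟨_, hπinv⟩]; simp only [mul_comm (F _)]
    _ = ∫ ω, F ω ∂μ := by
        rw [hbal (fun x => (π x)⁻¹) hπ.inv ⟨_, hπinv⟩]; congr 1; ext ω; field_simp [hπ0]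

end PropensityBalance

section BinaryContrast

variable {Ω : Type*} [MeasurableSpace Ω] {μ : Measure Ω}

lemma integral_mul_sub_eq_setIntegral_sub_setIntegral {D A0 A1 : Ω → ℝ} (hD : Integrable D μ)
    (hA0 : Measurable A0) (hA1 : Measurable A1)
    (hA0_01 : ∀ ω, A0 ω = 0 ∨ A0 ω = 1) (hA1_01 : ∀ ω, A1 ω = 0 ∨ A1 ω = 1) :
    ∫ ω, D ω * (A1 ω - A0 ω) ∂μ
      = (∫ ω in {ω | A1 ω = 1 ∧ A0 ω = 0}, D ω ∂μ) - ∫ ω in {ω | A1 ω = 0 ∧ A0 ω = 1}, D ω ∂μ := by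
  have hup : MeasurableSet {ω | A1 ω = 1 ∧ A0 ω = 0} :=
    (hA1 (measurableSet_singleton 1)).inter (hA0 (measurableSet_singleton 0))
  have hdown : MeasurableSet {ω | A1 ω = 0 ∧ A0 ω = 1} :=
    (hA1 (measurableSet_singleton 0)).inter (hA0 (measurableSet_singleton 1))
  rw [← integral_indicator hup, ← integral_indicator hdown,
    ← integral_sub (hD.indicator hup) (hD.indicator hdown)]
  congr 1; ext ω
  rcases hA0_01 ω with h0 | h0 <;> rcases hA1_01 ω with h1 | h1 <;> simp [Set.indicator, h0, h1]

end BinaryContrast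

theorem stmt_2_general
    {Ω : Type*} [MeasurableSpace Ω] (P : Measure Ω) [IsProbabilityMeasure P]
    {S : Type*} [mS : MeasurableSpace S]
    (X : Ω → S) (hX : Measurable X)
    (Z A0 A1 Y0 Y1 : Ω → ℝ)
    (hZ : Measurable Z) (hA0 : Measurable A0) (hA1 : Measurable A1)
    (hY0 : Measurable Y0) (hY1 : Measurable Y1)
    (hZ01 : ∀ ω, Z ω = 0 ∨ Z ω = 1)
    (hA0_01 : ∀ ω, A0 ω = 0 ∨ A0 ω = 1)
    (hA1_01 : ∀ ω, A1 ω = 0 ∨ A1 ω = 1)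
    (hY0b : ∃ C, ∀ ω, |Y0 ω| ≤ C) (hY1b : ∃ C, ∀ ω, |Y1 ω| ≤ C)
    (A Y : Ω → ℝ)
    (hA : A = fun ω => (1 - Z ω) * A0 ω + Z ω * A1 ω)
    (hY : Y = fun ω => (1 - A ω) * Y0 ω + A ω * Y1 ω)
    (e : S → ℝ) (he : Measurable e) (ε : ℝ) (hε : 0 < ε)
    (hebd : ∀ x, ε ≤ e x ∧ e x ≤ 1 - ε)
    (hUnconf : ∀ ψ : ℝ × ℝ × ℝ × ℝ → ℝ, Measurable ψ → (∃ C, ∀ v, |ψ v| ≤ C) →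
      ∀ g : S → ℝ, Measurable g → (∃ C, ∀ x, |g x| ≤ C) →
      ∫ ω, Z ω * ψ (A0 ω, A1 ω, Y0 ω, Y1 ω) * g (X ω) ∂P
        = ∫ ω, e (X ω) * ψ (A0 ω, A1 ω, Y0 ω, Y1 ω) * g (X ω) ∂P)
    (m0 m1 : S → ℝ) (hm0 : Measurable m0) (hm1 : Measurable m1)
    (hm0v : ∀ g : S → ℝ, Measurable g → (∃ C, ∀ x, |g x| ≤ C) →
      ∫ ω, Y ω * (if Z ω = 0 then (1:ℝ) else 0) * g (X ω) ∂P
        = ∫ ω, m0 (X ω) * (if Z ω = 0 then (1:ℝ) else 0) * g (X ω) ∂P)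
    (hm1v : ∀ g : S → ℝ, Measurable g → (∃ C, ∀ x, |g x| ≤ C) →
      ∫ ω, Y ω * (if Z ω = 1 then (1:ℝ) else 0) * g (X ω) ∂P
        = ∫ ω, m1 (X ω) * (if Z ω = 1 then (1:ℝ) else 0) * g (X ω) ∂P) :
    (∫ ω, (m1 (X ω) - m0 (X ω)) ∂P) = ∫ ω, (Y1 ω - Y0 ω) * (A1 ω - A0 ω) ∂P
    ∧ (∫ ω, (m1 (X ω) - m0 (X ω)) ∂P)
        = (∫ ω in {ω | A1 ω = 1 ∧ A0 ω = 0}, (Y1 ω - Y0 ω) ∂P)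
          - ∫ ω in {ω | A1 ω = 0 ∧ A0 ω = 1}, (Y1 ω - Y0 ω) ∂P := by
  obtain ⟨C0, hC0⟩ := hY0b
  obtain ⟨C1, hC1⟩ := hY1b
  have hYa (a : Ω → ℝ) (ha : ∀ ω, a ω = 0 ∨ a ω = 1) (ω : Ω) :
      |(1 - a ω) * Y0 ω + a ω * Y1 ω| ≤ max C0 C1 :=
    abs_one_sub_mul_add_mul_le (ha ω) ((hC0 ω).trans (le_max_left _ _))
      ((hC1 ω).trans (le_max_right _ _))
  have hbalZ (ψ : ℝ × ℝ × ℝ × ℝ → ℝ) (hψ : Measurable ψ) {C : ℝ}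
      (hC : ∀ ω, |ψ (A0 ω, A1 ω, Y0 ω, Y1 ω)| ≤ C) :
      PropensityBalanced P X Z e fun ω => ψ (A0 ω, A1 ω, Y0 ω, Y1 ω) :=
    propensityBalanced_comp_of_abs_le (W := fun ω => (A0 ω, A1 ω, Y0 ω, Y1 ω)) hUnconf hψ hC
  have hone : PropensityBalanced P X Z e 1 := hbalZ (fun _ => 1) measurable_const (C := 1) (by simp)
  have hZI : ∀ ω, Z ω ∈ Set.Icc (0 : ℝ) 1 := fun ω => by rcases hZ01 ω with h | h <;> simp [h]
  have heI : ∀ x, e x ∈ Set.Icc (0 : ℝ) 1 := fun x => ⟨by linarith [hebd x], by linarith [hebd x]⟩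
  have hY_of_Z1 (ω : Ω) : (if Z ω = 1 then (1 : ℝ) else 0) = Z ω
      ∧ Y ω * Z ω = ((1 - A1 ω) * Y0 ω + A1 ω * Y1 ω) * Z ω := by
    rcases hZ01 ω with h | h <;> simp [h, hY, hA]
  have hY_of_Z0 (ω : Ω) : (if Z ω = 0 then (1 : ℝ) else 0) = 1 - Z ω
      ∧ Y ω * (1 - Z ω) = ((1 - A0 ω) * Y0 ω + A0 ω * Y1 ω) * (1 - Z ω) := by
    rcases hZ01 ω with h | h <;> simp [h, hY, hA]
  obtain ⟨hm1i, hm1F⟩ := integrable_comp_and_integral_comp_eq_of_propensityBalanced hX hZ hZI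
    he hε (fun x => ⟨(hebd x).1, by linarith [hebd x]⟩) (by fun_prop) (hYa A1 hA1_01) hone
    (hbalZ (fun v => (1 - v.2.1) * v.2.2.1 + v.2.1 * v.2.2.2) (by fun_prop) (hYa A1 hA1_01))
    hm1 fun g hg hgb => by simpa only [hY_of_Z1] using hm1v g hg hgb
  obtain ⟨hm0i, hm0F⟩ := integrable_comp_and_integral_comp_eq_of_propensityBalanced hX
    (by fun_prop) (fun ω => Set.Icc.one_sub_mem (hZI ω)) (by fun_prop) hε
    (fun x => ⟨by linarith [hebd x], by linarith [hebd x]⟩) (by fun_prop) (hYa A0 hA0_01)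
    (hone.one_sub hX hZ hZI he heI measurable_one (C := 1) (by simp))
    ((hbalZ (fun v => (1 - v.1) * v.2.2.1 + v.1 * v.2.2.2) (by fun_prop) (hYa A0 hA0_01)).one_sub
      hX hZ hZI he heI (by fun_prop) (hYa A0 hA0_01))
    hm0 fun g hg hgb => by simpa only [hY_of_Z0] using hm0v g hg hgb
  have hcov : ∫ ω, (m1 (X ω) - m0 (X ω)) ∂P = ∫ ω, (Y1 ω - Y0 ω) * (A1 ω - A0 ω) ∂P := by
    rw [integral_sub hm1i hm0i, hm1F, hm0F,
      ← integral_sub (integrable_of_abs_le (by fun_prop) (hYa A1 hA1_01))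
        (integrable_of_abs_le (by fun_prop) (hYa A0 hA0_01))]
    congr 1; ext ω; ring
  exact ⟨hcov, hcov.trans (integral_mul_sub_eq_setIntegral_sub_setIntegral
    (integrable_of_abs_le (C := C1 + C0) (by fun_prop)
      fun ω => (abs_sub _ _).trans (add_le_add (hC1 ω) (hC0 ω))) hA0 hA1 hA0_01 hA1_01)⟩

/-- Without monotonicity, Γ0 := E[m1(X) − m0(X)] = E[(Y1 − Y0)·(A1 − A0)]
= E[(Y1 − Y0)·1{A1 > A0}] − E[(Y1 − Y0)·1{A1 < A0}]. -/
theorem stmt_2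
    {Ω : Type*} [MeasurableSpace Ω] (P : Measure Ω) [IsProbabilityMeasure P]
    {S : Type*} [mS : MeasurableSpace S]
    (X : Ω → S) (hX : Measurable X)
    (Z A0 A1 Y0 Y1 : Ω → ℝ)
    (hZ : Measurable Z) (hA0 : Measurable A0) (hA1 : Measurable A1)
    (hY0 : Measurable Y0) (hY1 : Measurable Y1)
    (hZ01 : ∀ ω, Z ω = 0 ∨ Z ω = 1)
    (hA0_01 : ∀ ω, A0 ω = 0 ∨ A0 ω = 1)
    (hA1_01 : ∀ ω, A1 ω = 0 ∨ A1 ω = 1)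
    (hY0b : ∃ C, ∀ ω, |Y0 ω| ≤ C) (hY1b : ∃ C, ∀ ω, |Y1 ω| ≤ C)
    (A Y : Ω → ℝ)
    (hA : A = fun ω => (1 - Z ω) * A0 ω + Z ω * A1 ω)
    (hY : Y = fun ω => (1 - A ω) * Y0 ω + A ω * Y1 ω)
    (e : S → ℝ) (he : Measurable e) (ε : ℝ) (hε : 0 < ε) (hε2 : ε < 1/2)
    (hebd : ∀ x, ε ≤ e x ∧ e x ≤ 1 - ε)
    (hVe : ∀ g : S → ℝ, Measurable g → (∃ C, ∀ x, |g x| ≤ C) →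
      ∫ ω, Z ω * g (X ω) ∂P = ∫ ω, e (X ω) * g (X ω) ∂P)
    (hUnconf : ∀ ψ : ℝ × ℝ × ℝ × ℝ → ℝ, Measurable ψ → (∃ C, ∀ v, |ψ v| ≤ C) →
      ∀ g : S → ℝ, Measurable g → (∃ C, ∀ x, |g x| ≤ C) →
      ∫ ω, Z ω * ψ (A0 ω, A1 ω, Y0 ω, Y1 ω) * g (X ω) ∂P
        = ∫ ω, e (X ω) * ψ (A0 ω, A1 ω, Y0 ω, Y1 ω) * g (X ω) ∂P)
    (m0 m1 : S → ℝ) (hm0 : Measurable m0) (hm1 : Measurable m1)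
    (hm0v : ∀ g : S → ℝ, Measurable g → (∃ C, ∀ x, |g x| ≤ C) →
      ∫ ω, Y ω * (if Z ω = 0 then (1:ℝ) else 0) * g (X ω) ∂P
        = ∫ ω, m0 (X ω) * (if Z ω = 0 then (1:ℝ) else 0) * g (X ω) ∂P)
    (hm1v : ∀ g : S → ℝ, Measurable g → (∃ C, ∀ x, |g x| ≤ C) →
      ∫ ω, Y ω * (if Z ω = 1 then (1:ℝ) else 0) * g (X ω) ∂P
        = ∫ ω, m1 (X ω) * (if Z ω = 1 then (1:ℝ) else 0) * g (X ω) ∂P) :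
    (∫ ω, (m1 (X ω) - m0 (X ω)) ∂P) = ∫ ω, (Y1 ω - Y0 ω) * (A1 ω - A0 ω) ∂P
    ∧ (∫ ω, (m1 (X ω) - m0 (X ω)) ∂P)
        = (∫ ω in {ω | A1 ω = 1 ∧ A0 ω = 0}, (Y1 ω - Y0 ω) ∂P)
          - ∫ ω in {ω | A1 ω = 0 ∧ A0 ω = 1}, (Y1 ω - Y0 ω) ∂P :=
  stmt_2_general P (mS := mS) X hX Z A0 A1 Y0 Y1 hZ hA0 hA1 hY0 hY1 hZ01 hA0_01 hA1_01 hY0b hY1b A Y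
    hA hY e he ε hε hebd hUnconf m0 m1 hm0 hm1 hm0v hm1v
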